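/- Let (φ_k) be an orthonormal system on [0,1] with ∫_0^1 φ_k(x) dx = 0 for k = 1,…,N, let (d_k) be positive real numbers, let ε = (ε_k) be a sequence with ε_k ∈ {-1,0,1}, let N ≥ 2, and set Q_N(x,ε) = Σ_{k=1}^N d_k k^{1/2} ε_k φ_k(x). Define f_N(x) = ∫_0^x sign(∫_0^y Q_N(z,ε) dz) dy for x ∈ [0,1]. Then |∫_0^1 f_N(x) Q_N(x,ε) dx| ≥ D_N(ε) − 3 · max_{1≤k≤N} d_k, where D_N(ε) = (1/N) Σ_{i=1}^{N−1} |∫_0^{i/N} Q_N(x,ε) dx|. -/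

import Mathlib

open MeasureTheory Set Filter

noncomputable section

/-- `φ` is an orthonormal system on `[0,1]` (indexed by `n ≥ 1`). -/
def IsONS (φ : ℕ → ℝ → ℝ) : Prop :=
  (∀ n, 1 ≤ n → MemLp (φ n) 2 (volume.restrict (Icc (0:ℝ) 1))) ∧
  ∀ n m, 1 ≤ n → 1 ≤ m →
    (∫ x in (0:ℝ)..1, φ n x * φ m x) = if n = m then 1 else 0

/-- `Q_N(x, ε) = ∑_{k=1}^N d_k k^{1/2} ε_k φ_k(x)`. -/
def QN (φ : ℕ → ℝ → ℝ) (d ε : ℕ → ℝ) (N : ℕ) (x : ℝ) : ℝ :=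
  ∑ k ∈ Finset.Icc 1 N, d k * Real.sqrt k * ε k * φ k x

/-- `D_N(ε) = (1/N) ∑_{i=1}^{N-1} |∫_0^{i/N} Q_N(x, ε) dx|`. -/
def DN (φ : ℕ → ℝ → ℝ) (d ε : ℕ → ℝ) (N : ℕ) : ℝ :=
  (1 / (N:ℝ)) * ∑ i ∈ Finset.Icc 1 (N - 1), |∫ x in (0:ℝ)..((i:ℝ)/(N:ℝ)), QN φ d ε N x|

/-!
Let `P x = ∫₀ˣ Q_N`. Every `φ_k` has mean zero, so `P 1 = 0`; as `f_N` is the primitive of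
`sign ∘ P`, integration by parts (both factors are absolutely continuous) gives
`∫₀¹ f_N Q_N = -∫₀¹ sign (P x) P x dx = -∫₀¹ |P|`. On `[i/N, (i+1)/N]` the function `|P|` stays
above `|P (i/N)|` minus the `L¹` mass of `Q_N` there, so `∫₀¹ |P| ≥ D_N - (1/N) ∫₀¹ |Q_N|`.
Finally `∫₀¹ |Q_N| ≤ ‖Q_N‖₂ = (∑ d_k² k ε_k²)^{1/2} ≤ N max d_k` by Cauchy–Schwarz and
orthonormality.
-/

theorem Real.measurable_sign : Measurable Real.sign :=
  Measurable.ite measurableSet_Iio measurable_const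
    (Measurable.ite measurableSet_Ioi measurable_const measurable_const)

theorem Real.sign_mul_self_eq_abs (r : ℝ) : Real.sign r * r = |r| := by
  rcases lt_trichotomy r 0 with h | rfl | h
  · simp [Real.sign_of_neg h, abs_of_neg h]
  · simp
  · simp [Real.sign_of_pos h, abs_of_pos h]

section Primitive

variable {g h : ℝ → ℝ} {a b : ℝ}

theorem ae_deriv_primitive_eq (hg : IntervalIntegrable g volume a b) :
    ∀ᵐ x, x ∈ uIcc a b → deriv (fun x => ∫ t in a..x, g t) x = g x := by
  filter_upwards [hg.ae_hasDerivAt_integral] with x hx hxab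
  exact (hx hxab a left_mem_uIcc).deriv

theorem integral_primitive_mul_eq_sub (hg : IntervalIntegrable g volume a b)
    (hh : IntervalIntegrable h volume a b) :
    ∫ x in a..b, (∫ t in a..x, g t) * h x =
      (∫ t in a..b, g t) * (∫ t in a..b, h t) - ∫ x in a..b, g x * ∫ t in a..x, h t := by
  have hG := hg.absolutelyContinuousOnInterval_intervalIntegral left_mem_uIcc
  have hH := hh.absolutelyContinuousOnInterval_intervalIntegral left_mem_uIcc
  have hparts := hG.integral_mul_deriv_eq_deriv_mul hH
  simp only [intervalIntegral.integral_same, mul_zero, sub_zero] at hparts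
  rw [intervalIntegral.integral_congr_ae ((ae_deriv_primitive_eq hh).mono fun x hx hxab => by
      rw [← hx (uIoc_subset_uIcc hxab)]), hparts]
  congr 1
  refine intervalIntegral.integral_congr_ae ((ae_deriv_primitive_eq hg).mono fun x hx hxab => ?_)
  rw [hx (uIoc_subset_uIcc hxab)]

theorem integral_primitive_sign_mul_eq_neg (hh : IntervalIntegrable h volume a b)
    (hb : ∫ t in a..b, h t = 0) :
    ∫ x in a..b, (∫ y in a..x, Real.sign (∫ t in a..y, h t)) * h x =
      -∫ x in a..b, |∫ t in a..x, h t| := by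
  have hcont : ContinuousOn (fun x => ∫ t in a..x, h t) (uIcc a b) :=
    intervalIntegral.continuousOn_primitive_interval ((intervalIntegrable_iff').1 hh)
  have hsign : IntervalIntegrable (fun y => Real.sign (∫ t in a..y, h t)) volume a b := by
    refine (intervalIntegrable_const (c := (1:ℝ))).mono_fun' ?_ (Eventually.of_forall fun y => ?_)
    · exact Real.measurable_sign.comp_aemeasurable
        ((hcont.mono uIoc_subset_uIcc).aemeasurable measurableSet_uIoc) |>.aestronglyMeasurable
    · rcases Real.sign_apply_eq (∫ t in a..y, h t) with h' | h' | h' <;> simp [h']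
  rw [integral_primitive_mul_eq_sub hsign hh, hb, mul_zero, zero_sub]
  simp_rw [Real.sign_mul_self_eq_abs]

end Primitive

section Discretization

variable {h : ℝ → ℝ} {a b c : ℝ}

theorem continuousOn_primitive_of_intervalIntegrable (hca : IntervalIntegrable h volume c a)
    (hab : IntervalIntegrable h volume a b) :
    ContinuousOn (fun x => ∫ t in c..x, h t) (uIcc a b) := by
  refine ((continuousOn_const (c := ∫ t in c..a, h t)).add
    (intervalIntegral.continuousOn_primitive_interval' hab left_mem_uIcc)).congr fun x hx => ?_
  exact (intervalIntegral.integral_add_adjacent_intervals hca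
    (hab.mono_set (uIcc_subset_uIcc left_mem_uIcc hx))).symm

theorem mul_abs_primitive_le (hca : IntervalIntegrable h volume c a)
    (hab : IntervalIntegrable h volume a b) (hle : a ≤ b) :
    (b - a) * |∫ t in c..a, h t| ≤
      (∫ x in a..b, |∫ t in c..x, h t|) + (b - a) * ∫ t in a..b, |h t| := by
  have hbound : ∀ x ∈ Icc a b,
      |∫ t in c..a, h t| - ∫ t in a..b, |h t| ≤ |∫ t in c..x, h t| := by
    intro x hx
    have hax : IntervalIntegrable h volume a x :=
      hab.mono_set (uIcc_subset_uIcc left_mem_uIcc (Icc_subset_uIcc hx))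
    have hvar : |∫ t in a..x, h t| ≤ ∫ t in a..b, |h t| :=
      (intervalIntegral.abs_integral_le_integral_abs hx.1).trans
        (intervalIntegral.integral_mono_interval le_rfl hx.1 hx.2
          (Eventually.of_forall fun t => abs_nonneg _) hab.abs)
    rw [← intervalIntegral.integral_add_adjacent_intervals hca hax]
    linarith [abs_sub_abs_le_abs_add (∫ t in c..a, h t) (∫ t in a..x, h t)]
  have hmono := intervalIntegral.integral_mono_on hle (intervalIntegrable_const (μ := volume))
    ((continuousOn_primitive_of_intervalIntegrable hca hab).abs.intervalIntegrable) hbound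
  rw [intervalIntegral.integral_const, smul_eq_mul, mul_sub] at hmono
  linarith

theorem mul_sum_abs_primitive_le {δ : ℝ} {n : ℕ}
    (hint : IntervalIntegrable h volume a (a + n * δ)) (hδ : 0 ≤ δ) :
    δ * ∑ i ∈ Finset.range n, |∫ t in a..a + i * δ, h t| ≤
      (∫ x in a..a + n * δ, |∫ t in a..x, h t|) + δ * ∫ t in a..a + n * δ, |h t| := by
  set p : ℕ → ℝ := fun i => a + i * δ
  have hp_mem : ∀ i ≤ n, p i ∈ uIcc a (a + n * δ) := fun i hi => by
    rw [uIcc_of_le (le_add_of_nonneg_right (by positivity))]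
    exact ⟨le_add_of_nonneg_right (by positivity),
      by simp only [p, add_le_add_iff_left]; gcongr⟩
  have hint_between : ∀ i ≤ n, ∀ j ≤ n, IntervalIntegrable h volume (p i) (p j) :=
    fun i hi j hj => hint.mono_set (uIcc_subset_uIcc (hp_mem i hi) (hp_mem j hj))
  have hp0 : p 0 = a := by simp [p]
  have hint_from : ∀ i ≤ n, IntervalIntegrable h volume a (p i) :=
    fun i hi => hp0 ▸ hint_between 0 (Nat.zero_le _) i hi
  have hstep : ∀ i < n, δ * |∫ t in a..p i, h t| ≤
      (∫ x in p i..p (i + 1), |∫ t in a..x, h t|) + δ * ∫ t in p i..p (i + 1), |h t| := by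
    intro i hi
    have hlen : p (i + 1) - p i = δ := by simp only [p]; push_cast; ring
    have hle : p i ≤ p (i + 1) := by linarith
    simpa only [hlen] using mul_abs_primitive_le (hint_from i hi.le)
      (hint_between i hi.le (i + 1) hi) hle
  calc δ * ∑ i ∈ Finset.range n, |∫ t in a..p i, h t|
      ≤ ∑ i ∈ Finset.range n, ((∫ x in p i..p (i + 1), |∫ t in a..x, h t|) +
          δ * ∫ t in p i..p (i + 1), |h t|) := by
        rw [Finset.mul_sum]
        exact Finset.sum_le_sum fun i hi => hstep i (Finset.mem_range.1 hi)
    _ = (∫ x in p 0..p n, |∫ t in a..x, h t|) + δ * ∫ t in p 0..p n, |h t| := by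
        rw [Finset.sum_add_distrib, ← Finset.mul_sum,
          intervalIntegral.sum_integral_adjacent_intervals fun i hi =>
            (continuousOn_primitive_of_intervalIntegrable (hint_from i hi.le)
              (hint_between i hi.le (i + 1) hi)).abs.intervalIntegrable,
          intervalIntegral.sum_integral_adjacent_intervals fun i hi =>
            (hint_between i hi.le (i + 1) hi).abs]
    _ = _ := by rw [hp0]

end Discretization

theorem sq_integral_abs_le_integral_sq {Ω : Type*} [MeasurableSpace Ω] {μ : Measure Ω}
    [IsProbabilityMeasure μ] {f : Ω → ℝ} (hf : MemLp f 2 μ) :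
    (∫ x, |f x| ∂μ) ^ 2 ≤ ∫ x, f x ^ 2 ∂μ := by
  have hvar := ProbabilityTheory.variance_nonneg |f| μ
  rw [ProbabilityTheory.variance_eq_sub hf.abs] at hvar
  simp only [Pi.pow_apply, Pi.abs_apply, sq_abs] at hvar
  linarith

theorem sq_intervalIntegral_abs_le_integral_sq {f : ℝ → ℝ}
    (hf : MemLp f 2 (volume.restrict (Icc (0:ℝ) 1))) :
    (∫ x in (0:ℝ)..1, |f x|) ^ 2 ≤ ∫ x in (0:ℝ)..1, f x ^ 2 := by
  have : IsProbabilityMeasure (volume.restrict (Ioc (0:ℝ) 1)) := ⟨by simp⟩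
  simp only [intervalIntegral.integral_of_le zero_le_one]
  exact sq_integral_abs_le_integral_sq
    (hf.mono_measure (Measure.restrict_mono Ioc_subset_Icc_self le_rfl))

namespace IsONS

variable {φ : ℕ → ℝ → ℝ}

theorem intervalIntegrable (hφ : IsONS φ) {n : ℕ} (hn : 1 ≤ n) :
    IntervalIntegrable (φ n) volume 0 1 :=
  (intervalIntegrable_iff_integrableOn_Icc_of_le zero_le_one).2
    ((hφ.1 n hn).integrable one_le_two)

theorem intervalIntegrable_mul (hφ : IsONS φ) {n m : ℕ} (hn : 1 ≤ n) (hm : 1 ≤ m) :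
    IntervalIntegrable (fun x => φ n x * φ m x) volume 0 1 :=
  (intervalIntegrable_iff_integrableOn_Icc_of_le zero_le_one).2
    ((hφ.1 n hn).integrable_mul (hφ.1 m hm) (p := 2) (q := 2))

theorem integral_sum_sq (hφ : IsONS φ) {s : Finset ℕ} (hs : ∀ k ∈ s, 1 ≤ k) (c : ℕ → ℝ) :
    ∫ x in (0:ℝ)..1, (∑ k ∈ s, c k * φ k x) ^ 2 = ∑ k ∈ s, c k ^ 2 := by
  have hprod : ∀ k ∈ s, ∀ j ∈ s,
      IntervalIntegrable (fun x => c k * φ k x * (c j * φ j x)) volume 0 1 := by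
    intro k hk j hj
    simpa only [mul_mul_mul_comm] using
      (hφ.intervalIntegrable_mul (hs k hk) (hs j hj)).const_mul (c k * c j)
  have hterm : ∀ k ∈ s, ∀ j ∈ s,
      ∫ x in (0:ℝ)..1, c k * φ k x * (c j * φ j x) = if k = j then c k ^ 2 else 0 := by
    intro k hk j hj
    simp_rw [show ∀ x, c k * φ k x * (c j * φ j x) = c k * c j * (φ k x * φ j x) from
      fun x => by ring]
    rw [intervalIntegral.integral_const_mul, hφ.2 k j (hs k hk) (hs j hj)]
    split_ifs with hkj <;> simp [hkj, sq]
  have hexpand : ∀ x, (∑ k ∈ s, c k * φ k x) ^ 2 =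
      ∑ k ∈ s, ∑ j ∈ s, c k * φ k x * (c j * φ j x) := fun x => by
    rw [sq, Finset.sum_mul_sum]
  simp_rw [hexpand]
  rw [intervalIntegral.integral_finsetSum fun k hk => by
    simpa only [Finset.sum_fn] using IntervalIntegrable.sum s (hprod k hk)]
  refine Finset.sum_congr rfl fun k hk => ?_
  rw [intervalIntegral.integral_finsetSum (hprod k hk), Finset.sum_congr rfl (hterm k hk),
    Finset.sum_ite_eq, if_pos hk]

end IsONS

section QN

variable {φ : ℕ → ℝ → ℝ} {d ε : ℕ → ℝ} {N : ℕ}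

theorem memLp_QN (hφ : IsONS φ) : MemLp (QN φ d ε N) 2 (volume.restrict (Icc (0:ℝ) 1)) :=
  memLp_finsetSum _ fun k hk => (hφ.1 k (Finset.mem_Icc.1 hk).1).const_mul _

theorem intervalIntegrable_QN (hφ : IsONS φ) : IntervalIntegrable (QN φ d ε N) volume 0 1 :=
  (intervalIntegrable_iff_integrableOn_Icc_of_le zero_le_one).2
    ((memLp_QN hφ).integrable one_le_two)

theorem integral_QN_eq_zero (hφ : IsONS φ)
    (hzero : ∀ k, 1 ≤ k → k ≤ N → ∫ x in (0:ℝ)..1, φ k x = 0) :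
    ∫ x in (0:ℝ)..1, QN φ d ε N x = 0 := by
  unfold QN
  rw [intervalIntegral.integral_finsetSum fun k hk =>
    (hφ.intervalIntegrable (Finset.mem_Icc.1 hk).1).const_mul _]
  refine Finset.sum_eq_zero fun k hk => ?_
  obtain ⟨hk1, hkN⟩ := Finset.mem_Icc.1 hk
  rw [intervalIntegral.integral_const_mul, hzero k hk1 hkN, mul_zero]

theorem integral_QN_sq (hφ : IsONS φ) :
    ∫ x in (0:ℝ)..1, QN φ d ε N x ^ 2 = ∑ k ∈ Finset.Icc 1 N, (d k * Real.sqrt k * ε k) ^ 2 :=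
  hφ.integral_sum_sq (fun _ hk => (Finset.mem_Icc.1 hk).1) _

theorem sum_sq_coeff_QN_le {M : ℝ} (hd : ∀ k ∈ Finset.Icc 1 N, |d k| ≤ M)
    (hε : ∀ k ∈ Finset.Icc 1 N, |ε k| ≤ 1) :
    ∑ k ∈ Finset.Icc 1 N, (d k * Real.sqrt k * ε k) ^ 2 ≤ (N * M) ^ 2 := by
  have hterm : ∀ k ∈ Finset.Icc 1 N, (d k * Real.sqrt k * ε k) ^ 2 ≤ N * M ^ 2 := by
    intro k hk
    have hkN : (k : ℝ) ≤ N := by exact_mod_cast (Finset.mem_Icc.1 hk).2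
    have hd2 : d k ^ 2 ≤ M ^ 2 := sq_le_sq' (abs_le.1 (hd k hk)).1 (abs_le.1 (hd k hk)).2
    have hε2 : ε k ^ 2 ≤ 1 := (sq_le_one_iff_abs_le_one _).2 (hε k hk)
    rw [mul_pow, mul_pow, Real.sq_sqrt (Nat.cast_nonneg k)]
    calc d k ^ 2 * k * ε k ^ 2 ≤ M ^ 2 * N * 1 := by gcongr
      _ = N * M ^ 2 := by ring
  calc ∑ k ∈ Finset.Icc 1 N, (d k * Real.sqrt k * ε k) ^ 2
      ≤ ∑ _k ∈ Finset.Icc 1 N, (N : ℝ) * M ^ 2 := Finset.sum_le_sum hterm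
    _ = (N * M) ^ 2 := by simp only [Finset.sum_const, Nat.card_Icc, nsmul_eq_mul]; push_cast; ring

theorem integral_abs_QN_le (hφ : IsONS φ) {M : ℝ} (hM : 0 ≤ M)
    (hd : ∀ k ∈ Finset.Icc 1 N, |d k| ≤ M) (hε : ∀ k ∈ Finset.Icc 1 N, |ε k| ≤ 1) :
    ∫ x in (0:ℝ)..1, |QN φ d ε N x| ≤ N * M :=
  le_of_pow_le_pow_left₀ two_ne_zero (by positivity) <|
    (sq_intervalIntegral_abs_le_integral_sq (memLp_QN hφ)).trans <|
      (integral_QN_sq hφ).trans_le (sum_sq_coeff_QN_le hd hε)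

theorem DN_eq_sum_range :
    DN φ d ε N = 1 / N * ∑ i ∈ Finset.range N, |∫ x in (0:ℝ)..(i:ℝ) / N, QN φ d ε N x| := by
  unfold DN
  congr 1
  refine Finset.sum_subset (fun i hi => ?_) fun i hi hi' => ?_
  · simp only [Finset.mem_Icc, Finset.mem_range] at hi ⊢
    omega
  · obtain rfl : i = 0 := by simp only [Finset.mem_Icc, Finset.mem_range] at hi hi'; omega
    simp

end QN

theorem statement9 (φ : ℕ → ℝ → ℝ) (hONS : IsONS φ)
    (d : ℕ → ℝ) (hdpos : ∀ k, 0 < d k)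
    (ε : ℕ → ℝ) (hε : ∀ n, ε n = -1 ∨ ε n = 0 ∨ ε n = 1)
    (N : ℕ) (hN : 2 ≤ N)
    (hzero : ∀ k, 1 ≤ k → k ≤ N → (∫ x in (0:ℝ)..1, φ k x) = 0)
    (fN : ℝ → ℝ)
    (hfN : ∀ x ∈ Icc (0:ℝ) 1,
      fN x = ∫ y in (0:ℝ)..x, Real.sign (∫ z in (0:ℝ)..y, QN φ d ε N z)) :
    |∫ x in (0:ℝ)..1, fN x * QN φ d ε N x| ≥
      DN φ d ε N -
        3 * (Finset.Icc 1 N).sup' (Finset.nonempty_Icc.mpr (by omega)) d := by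
  set M := (Finset.Icc 1 N).sup' (Finset.nonempty_Icc.mpr (by omega)) d
  set Q := QN φ d ε N
  have hd : ∀ k ∈ Finset.Icc 1 N, |d k| ≤ M := fun k hk =>
    (abs_of_pos (hdpos k)).le.trans (Finset.le_sup' d hk)
  have hM : 0 ≤ M := (abs_nonneg _).trans (hd 1 (Finset.mem_Icc.2 ⟨le_rfl, by omega⟩))
  have hε' : ∀ k ∈ Finset.Icc 1 N, |ε k| ≤ 1 := fun k _ => by
    rcases hε k with h | h | h <;> simp [h]
  have hN0 : (N : ℝ) ≠ 0 := Nat.cast_ne_zero.2 (by omega)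
  have hQ : IntervalIntegrable Q volume 0 1 := intervalIntegrable_QN hONS
  have hparts : |∫ x in (0:ℝ)..1, fN x * Q x| = ∫ x in (0:ℝ)..1, |∫ t in (0:ℝ)..x, Q t| := by
    rw [intervalIntegral.integral_congr (g := fun x => (∫ y in (0:ℝ)..x,
        Real.sign (∫ z in (0:ℝ)..y, Q z)) * Q x) fun x hx => by
          rw [uIcc_of_le zero_le_one] at hx; simp only [hfN x hx],
      integral_primitive_sign_mul_eq_neg hQ (integral_QN_eq_zero hONS hzero), abs_neg,
      abs_of_nonneg (intervalIntegral.integral_nonneg zero_le_one fun _ _ => abs_nonneg _)]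
  have hdisc := mul_sum_abs_primitive_le (a := 0) (δ := 1 / N) (n := N)
    (by simpa [hN0] using hQ) (by positivity)
  simp only [zero_add, mul_one_div, div_self hN0] at hdisc
  have hL1 : 1 / N * ∫ x in (0:ℝ)..1, |Q x| ≤ M := by
    rw [one_div_mul_eq_div, div_le_iff₀ (by positivity), mul_comm]
    exact integral_abs_QN_le hONS hM hd hε'
  rw [ge_iff_le, hparts, DN_eq_sum_range]
  linarith
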